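/- arXiv:2107.09259 — 5 statements merged into one kernel-verified Lean document; each statement's English description precedes it below -/
import Mathlib

section
/- If N is a Nijenhuis operator on an associative algebra (A, μ), then (A, μ, μ_N) is a compatible associative algebra, i.e. μ_N is associative and the compatibility condition (a·b)·_N c + (a·_N b)·c = a·(b·_N c) + a·_N (b·c) holds. -/
/-!
Compatibility is a direct expansion that uses only the associativity of `μ`. For the
associativity of `μ_N`, the Nijenhuis identity `N (a ·_N b) = N a · N b` turns the associator
`(a ·_N b) ·_N c - a ·_N (b ·_N c)` into `N` applied to the defect of the compatibility
condition at `(a, b, c)`, which is zero.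
-/

namespace NijenhuisDeformation

variable {R A : Type*} [CommSemiring R] [AddCommGroup A] [Module R A]
  (μ : A →ₗ[R] A →ₗ[R] A) (N : A →ₗ[R] A)

def deformedMul (a b : A) : A := μ (N a) b + μ a (N b) - N (μ a b)

def IsNijenhuis : Prop := ∀ a b : A, μ (N a) (N b) = N (deformedMul μ N a b)

variable {μ N}

theorem deformedMul_compatible (hassoc : ∀ a b c : A, μ (μ a b) c = μ a (μ b c)) (a b c : A) :
    deformedMul μ N (μ a b) c + μ (deformedMul μ N a b) c =
      μ a (deformedMul μ N b c) + deformedMul μ N a (μ b c) := by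
  simp only [deformedMul, map_add, map_sub, LinearMap.add_apply, LinearMap.sub_apply, hassoc]
  abel

theorem deformedMul_assoc (hassoc : ∀ a b c : A, μ (μ a b) c = μ a (μ b c))
    (hN : IsNijenhuis μ N) (a b c : A) :
    deformedMul μ N (deformedMul μ N a b) c = deformedMul μ N a (deformedMul μ N b c) := by
  have deformedMul_mul_N : μ (deformedMul μ N a b) (N c) =
      μ (N a) (μ b (N c)) + μ a (μ (N b) (N c)) - N (deformedMul μ N (μ a b) c) := by
    rw [deformedMul, map_sub, map_add, LinearMap.sub_apply, LinearMap.add_apply, hN, hassoc,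
      hassoc]
  have N_mul_deformedMul : μ (N a) (deformedMul μ N b c) =
      μ (N a) (μ (N b) c) + μ (N a) (μ b (N c)) - N (deformedMul μ N a (μ b c)) := by
    rw [deformedMul, map_sub, map_add, hN]
  have defect : deformedMul μ N (deformedMul μ N a b) c - deformedMul μ N a (deformedMul μ N b c) =
      N ((μ a (deformedMul μ N b c) + deformedMul μ N a (μ b c)) -
        (deformedMul μ N (μ a b) c + μ (deformedMul μ N a b) c)) := by
    rw [deformedMul.eq_1 μ N (deformedMul μ N a b), deformedMul.eq_1 μ N a (deformedMul μ N b c),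
      ← hN a b, ← hN b c, deformedMul_mul_N, N_mul_deformedMul]
    simp only [map_add, map_sub, hassoc]
    abel
  rw [← sub_eq_zero, defect, deformedMul_compatible hassoc, sub_self, map_zero]

end NijenhuisDeformation

theorem nijenhuis_gives_compatible_associative_general
    {K A : Type*} [Field K] [AddCommGroup A] [Module K A]
    (μ : A →ₗ[K] A →ₗ[K] A)
    (hassoc : ∀ a b c : A, μ (μ a b) c = μ a (μ b c))
    (N : A →ₗ[K] A)
    (hN : ∀ a b : A, μ (N a) (N b) = N (μ (N a) b + μ a (N b) - N (μ a b)))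
    (μN : A → A → A)
    (hμN : ∀ a b : A, μN a b = μ (N a) b + μ a (N b) - N (μ a b)) :
    (∀ a b c : A, μN (μN a b) c = μN a (μN b c)) ∧
    (∀ a b c : A, μN (μ a b) c + μ (μN a b) c = μ a (μN b c) + μN a (μ b c)) := by
  obtain rfl : μN = NijenhuisDeformation.deformedMul μ N := funext₂ hμN
  exact ⟨NijenhuisDeformation.deformedMul_assoc hassoc hN,
    NijenhuisDeformation.deformedMul_compatible hassoc⟩

/-- If `N` is a Nijenhuis operator on an associative algebra `(A, μ)`, then `(A, μ, μ_N)`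
is a compatible associative algebra: `μ_N` is associative and the compatibility condition
`(a·b)·_N c + (a·_N b)·c = a·(b·_N c) + a·_N (b·c)` holds. -/
theorem nijenhuis_gives_compatible_associative
    {K A : Type*} [Field K] [CharZero K] [AddCommGroup A] [Module K A]
    (μ : A →ₗ[K] A →ₗ[K] A)
    (hassoc : ∀ a b c : A, μ (μ a b) c = μ a (μ b c))
    (N : A →ₗ[K] A)
    (hN : ∀ a b : A, μ (N a) (N b) = N (μ (N a) b + μ a (N b) - N (μ a b)))
    (μN : A → A → A)
    (hμN : ∀ a b : A, μN a b = μ (N a) b + μ a (N b) - N (μ a b)) :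
    (∀ a b c : A, μN (μN a b) c = μN a (μN b c)) ∧
    (∀ a b c : A, μN (μ a b) c + μ (μN a b) c = μ a (μN b c) + μN a (μ b c)) :=
  nijenhuis_gives_compatible_associative_general μ hassoc N hN μN hμN
end

section
/- If R, S : A → A are compatible Rota-Baxter operators on an associative algebra A, then the products a·_R b = R(a)·b + a·R(b) and a·_S b = S(a)·b + a·S(b) define a compatible associative algebra structure on A. -/
/-! The compatibility condition on `R` and `S` is exactly the polarization of the Rota-Baxter
identity, so `R + S` is again a Rota-Baxter operator. A Rota-Baxter operator `R` makes
`a ·_R b = R(a)·b + a·R(b)` associative, and `·_{R+S} = ·_R + ·_S`; the compatibility of `·_R`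
and `·_S` is the cross term left over when the associativity of `·_R` and of `·_S` is subtracted
from that of `·_{R+S}`. -/

section

variable {K A : Type*} [CommSemiring K] [AddCommGroup A] [Module K A]

def IsRotaBaxter (μ : A →ₗ[K] A →ₗ[K] A) (R : A →ₗ[K] A) : Prop :=
  ∀ a b : A, μ (R a) (R b) = R (μ (R a) b + μ a (R b))

def rotaBaxterMul (μ : A →ₗ[K] A →ₗ[K] A) (R : A →ₗ[K] A) (a b : A) : A :=
  μ (R a) b + μ a (R b)

theorem IsRotaBaxter.add {μ : A →ₗ[K] A →ₗ[K] A} {R S : A →ₗ[K] A}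
    (hR : IsRotaBaxter μ R) (hS : IsRotaBaxter μ S)
    (hRS : ∀ a b : A, μ (R a) (S b) + μ (S a) (R b)
      = R (μ (S a) b + μ a (S b)) + S (μ (R a) b + μ a (R b))) :
    IsRotaBaxter μ (R + S) := by
  intro a b
  have hRR := hR a b
  have hSS := hS a b
  have hcross := hRS a b
  simp only [LinearMap.add_apply, map_add] at hRR hSS hcross ⊢
  linear_combination (norm := abel) hRR + hSS + hcross

theorem rotaBaxterMul_assoc {μ : A →ₗ[K] A →ₗ[K] A}
    (hassoc : ∀ a b c : A, μ (μ a b) c = μ a (μ b c)) {R : A →ₗ[K] A} (hR : IsRotaBaxter μ R)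
    (a b c : A) :
    rotaBaxterMul μ R (rotaBaxterMul μ R a b) c
      = rotaBaxterMul μ R a (rotaBaxterMul μ R b c) := by
  -- both sides reduce to `(R a · R b) · c + R a · b · R c + a · (R b · R c)`
  have hab := congrArg (μ · c) (hR a b)
  have hbc := congrArg (μ a) (hR b c)
  simp only [rotaBaxterMul, map_add, LinearMap.add_apply, hassoc] at hab hbc ⊢
  linear_combination (norm := abel) hbc - hab

theorem rotaBaxterMul_compatible {μ : A →ₗ[K] A →ₗ[K] A}
    (hassoc : ∀ a b c : A, μ (μ a b) c = μ a (μ b c)) {R S : A →ₗ[K] A}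
    (hR : IsRotaBaxter μ R) (hS : IsRotaBaxter μ S) (hRS : IsRotaBaxter μ (R + S)) (a b c : A) :
    rotaBaxterMul μ S (rotaBaxterMul μ R a b) c + rotaBaxterMul μ R (rotaBaxterMul μ S a b) c
      = rotaBaxterMul μ R a (rotaBaxterMul μ S b c)
        + rotaBaxterMul μ S a (rotaBaxterMul μ R b c) := by
  have hsum := rotaBaxterMul_assoc hassoc hRS a b c
  have hR' := rotaBaxterMul_assoc hassoc hR a b c
  have hS' := rotaBaxterMul_assoc hassoc hS a b c
  simp only [rotaBaxterMul, map_add, LinearMap.add_apply] at hsum hR' hS' ⊢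
  linear_combination (norm := abel) hsum - hR' - hS'

end

theorem compatible_rota_baxter_gives_compatible_associative_general
    {K A : Type*} [Field K] [AddCommGroup A] [Module K A]
    (μ : A →ₗ[K] A →ₗ[K] A)
    (hassoc : ∀ a b c : A, μ (μ a b) c = μ a (μ b c))
    (R S : A →ₗ[K] A)
    (hR : ∀ a b : A, μ (R a) (R b) = R (μ (R a) b + μ a (R b)))
    (hS : ∀ a b : A, μ (S a) (S b) = S (μ (S a) b + μ a (S b)))
    (hRS : ∀ a b : A, μ (R a) (S b) + μ (S a) (R b)
      = R (μ (S a) b + μ a (S b)) + S (μ (R a) b + μ a (R b)))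
    (μR μS : A → A → A)
    (hμR : ∀ a b : A, μR a b = μ (R a) b + μ a (R b))
    (hμS : ∀ a b : A, μS a b = μ (S a) b + μ a (S b)) :
    (∀ a b c : A, μR (μR a b) c = μR a (μR b c)) ∧
    (∀ a b c : A, μS (μS a b) c = μS a (μS b c)) ∧
    (∀ a b c : A, μS (μR a b) c + μR (μS a b) c = μR a (μS b c) + μS a (μR b c)) := by
  obtain rfl : μR = rotaBaxterMul μ R := funext₂ hμR
  obtain rfl : μS = rotaBaxterMul μ S := funext₂ hμS
  exact ⟨rotaBaxterMul_assoc hassoc hR, rotaBaxterMul_assoc hassoc hS,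
    rotaBaxterMul_compatible hassoc hR hS (IsRotaBaxter.add hR hS hRS)⟩

/-- If `R, S` are compatible Rota-Baxter operators on an associative algebra `A`, then the
products `a ·_R b = R(a)·b + a·R(b)` and `a ·_S b = S(a)·b + a·S(b)` define a compatible
associative algebra structure on `A`. -/
theorem compatible_rota_baxter_gives_compatible_associative
    {K A : Type*} [Field K] [CharZero K] [AddCommGroup A] [Module K A]
    (μ : A →ₗ[K] A →ₗ[K] A)
    (hassoc : ∀ a b c : A, μ (μ a b) c = μ a (μ b c))
    (R S : A →ₗ[K] A)
    (hR : ∀ a b : A, μ (R a) (R b) = R (μ (R a) b + μ a (R b)))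
    (hS : ∀ a b : A, μ (S a) (S b) = S (μ (S a) b + μ a (S b)))
    (hRS : ∀ a b : A, μ (R a) (S b) + μ (S a) (R b)
      = R (μ (S a) b + μ a (S b)) + S (μ (R a) b + μ a (R b)))
    (μR μS : A → A → A)
    (hμR : ∀ a b : A, μR a b = μ (R a) b + μ a (R b))
    (hμS : ∀ a b : A, μS a b = μ (S a) b + μ a (S b)) :
    (∀ a b c : A, μR (μR a b) c = μR a (μR b c)) ∧
    (∀ a b c : A, μS (μS a b) c = μS a (μS b c)) ∧
    (∀ a b c : A, μS (μR a b) c + μR (μS a b) c = μR a (μS b c) + μS a (μR b c)) :=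
  compatible_rota_baxter_gives_compatible_associative_general μ hassoc R S hR hS hRS μR μS hμR hμS
end

section
/- Let g = ⊕_{n≥0} g^n be a graded Lie algebra. Define g_c with (g_c)^0 = g^0 and (g_c)^n equal to the direct sum of n+1 copies of g^n, and bracket ⟦(f₁,...,f_{m+1}), (g₁,...,g_{n+1})⟧ whose i-th component is Σ_{q+r=i+1} [f_q, g_r]. Then (g_c, ⟦·,·⟧) is a graded Lie algebra. -/
/-- Transport along an equality of degrees. -/
def GradedCast {F : ℕ → Type*} {a b : ℕ} (h : a = b) (x : F a) : F b := h ▸ x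

/-- The bracket on `g_c`, where `(g_c)^n` is the direct sum of `n+1` copies of `g^n`,
modelled as `Fin (n+1) → g n`.  The `i`-th component of `⟦f, f'⟧` is
`∑_{q+r=i} [f_q, f'_r]`. -/
def gcBr {g : ℕ → Type*} [∀ n, AddCommGroup (g n)]
    (br : ∀ {m n : ℕ}, g m → g n → g (m + n)) {m n : ℕ}
    (f : Fin (m + 1) → g m) (f' : Fin (n + 1) → g n) : Fin (m + n + 1) → g (m + n) :=
  fun i => ∑ q ∈ Finset.range (i.1 + 1),
    if h : q ≤ m ∧ i.1 - q ≤ n then br (f ⟨q, by omega⟩) (f' ⟨i.1 - q, by omega⟩) else 0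

/-!
Read `x : Fin (m + 1) → g m` as the polynomial `∑ x_q t^q` with coefficients in `g^m` and `t`
of degree `0`. Then `gcBr` is the bracket of `g` extended `t`-bilinearly, so the coefficients of
`⟦x, y⟧` are Cauchy products. Skew-symmetry and the Jacobi identity of `g` therefore pass to
`g_c` coefficientwise, once the triple Cauchy sums are reindexed using the commutativity and
associativity of addition of exponents.
-/

open Finset

theorem Finset.sum_antidiagonal_antidiagonal_assoc {A M : Type*} [AddMonoid A] [HasAntidiagonal A]
    [AddCommMonoid M] (f : A → A → A → M) (n : A) :
    ∑ p ∈ antidiagonal n, ∑ q ∈ antidiagonal p.2, f p.1 q.1 q.2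
      = ∑ p ∈ antidiagonal n, ∑ q ∈ antidiagonal p.1, f q.1 q.2 p.2 := by
  rw [sum_sigma', sum_sigma']
  refine sum_nbij' (fun x => ⟨(x.1.1 + x.2.1, x.2.2), (x.1.1, x.2.1)⟩)
    (fun x => ⟨(x.2.1, x.2.2 + x.1.2), (x.2.2, x.1.2)⟩) ?_ ?_ ?_ ?_ ?_
  all_goals
    rintro ⟨⟨a, s⟩, ⟨b, c⟩⟩ h
    simp only [mem_sigma, HasAntidiagonal.mem_antidiagonal] at h ⊢
  · obtain ⟨rfl, rfl⟩ := h; exact ⟨add_assoc a b c, trivial⟩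
  · obtain ⟨rfl, rfl⟩ := h; exact ⟨(add_assoc b c s).symm, trivial⟩
  · rw [h.2]
  · rw [h.2]

theorem Finset.sum_antidiagonal_antidiagonal_left_comm {A M : Type*} [AddCommMonoid A]
    [HasAntidiagonal A] [AddCommMonoid M] (f : A → A → A → M) (n : A) :
    ∑ p ∈ antidiagonal n, ∑ q ∈ antidiagonal p.2, f p.1 q.1 q.2
      = ∑ p ∈ antidiagonal n, ∑ q ∈ antidiagonal p.2, f q.1 p.1 q.2 := by
  rw [sum_sigma', sum_sigma']
  refine sum_nbij' (fun x => ⟨(x.2.1, x.1.1 + x.2.2), (x.1.1, x.2.2)⟩)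
    (fun x => ⟨(x.2.1, x.1.1 + x.2.2), (x.1.1, x.2.2)⟩) ?_ ?_ ?_ ?_ ?_
  all_goals
    rintro ⟨⟨a, s⟩, ⟨b, c⟩⟩ h
    simp only [mem_sigma, HasAntidiagonal.mem_antidiagonal] at h ⊢
  · obtain ⟨rfl, rfl⟩ := h; exact ⟨add_left_comm b a c, trivial⟩
  · obtain ⟨rfl, rfl⟩ := h; exact ⟨add_left_comm b a c, trivial⟩
  · rw [h.2]
  · rw [h.2]

section GradedCast

variable {g : ℕ → Type*}

theorem gradedCast_pi_apply {a b : ℕ} (h : a = b) (f : Fin (a + 1) → g a) (i : Fin (b + 1)) :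
    GradedCast (F := fun k => Fin (k + 1) → g k) h f i
      = GradedCast (F := g) h (f ⟨i, by omega⟩) := by
  subst h; rfl

theorem gradedCast_sum [∀ n, AddCommGroup (g n)] {a b : ℕ} (h : a = b) {ι : Type*}
    (s : Finset ι) (f : ι → g a) :
    GradedCast (F := g) h (∑ i ∈ s, f i) = ∑ i ∈ s, GradedCast (F := g) h (f i) := by
  subst h; rfl

end GradedCast

section Bracket

variable {g : ℕ → Type*} [∀ n, AddCommGroup (g n)]
  (br : ∀ {m n : ℕ}, g m → g n → g (m + n))
  (hL : ∀ {m n : ℕ} (x y : g m) (z : g n), br (x + y) z = br x z + br y z)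
  (hR : ∀ {m n : ℕ} (x : g m) (y z : g n), br x (y + z) = br x y + br x z)

include hL in
theorem br_zero_left {m n : ℕ} (z : g n) : br (0 : g m) z = 0 :=
  (AddMonoidHom.mk' (br · z) fun x y => hL x y z).map_zero

include hR in
theorem br_zero_right {m n : ℕ} (x : g m) : br x (0 : g n) = 0 :=
  (AddMonoidHom.mk' (br x) (hR x)).map_zero

include hL in
theorem br_sum_left {m n : ℕ} (z : g n) {ι : Type*} (s : Finset ι) (f : ι → g m) :
    br (∑ i ∈ s, f i) z = ∑ i ∈ s, br (f i) z :=
  map_sum (AddMonoidHom.mk' (br · z) fun x y => hL x y z) f s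

include hR in
theorem br_sum_right {m n : ℕ} (x : g m) {ι : Type*} (s : Finset ι) (f : ι → g n) :
    br x (∑ i ∈ s, f i) = ∑ i ∈ s, br x (f i) :=
  map_sum (AddMonoidHom.mk' (br x) (hR x)) f s

/-- The coefficient of `t^q` in `x`, read as a polynomial in `t` of degree at most `m`. -/
def gcCoeff {m : ℕ} (x : Fin (m + 1) → g m) (q : ℕ) : g m :=
  if h : q ≤ m then x ⟨q, by omega⟩ else 0

theorem gcCoeff_of_lt {m : ℕ} (x : Fin (m + 1) → g m) {q : ℕ} (hq : m < q) : gcCoeff x q = 0 :=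
  dif_neg (by omega)

include hL hR in
theorem gcBr_apply {m n : ℕ} (x : Fin (m + 1) → g m) (y : Fin (n + 1) → g n)
    (i : Fin (m + n + 1)) :
    gcBr br x y i = ∑ p ∈ antidiagonal i.1, br (gcCoeff x p.1) (gcCoeff y p.2) := by
  rw [Nat.sum_antidiagonal_eq_sum_range_succ fun a b => br (gcCoeff x a) (gcCoeff y b)]
  refine sum_congr rfl fun q _ => ?_
  by_cases hq : q ≤ m
  · by_cases hr : i.1 - q ≤ n
    · rw [dif_pos ⟨hq, hr⟩, gcCoeff, gcCoeff, dif_pos hq, dif_pos hr]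
    · rw [dif_neg (by omega), gcCoeff_of_lt y (by omega), br_zero_right @br @hR]
  · rw [dif_neg (by omega), gcCoeff_of_lt x (by omega), br_zero_left @br @hL]

include hL hR in
theorem gcCoeff_gcBr {m n : ℕ} (x : Fin (m + 1) → g m) (y : Fin (n + 1) → g n) (s : ℕ) :
    gcCoeff (gcBr br x y) s = ∑ p ∈ antidiagonal s, br (gcCoeff x p.1) (gcCoeff y p.2) := by
  by_cases hs : s ≤ m + n
  · exact (dif_pos hs).trans (gcBr_apply @br @hL @hR x y ⟨s, by omega⟩)
  · rw [gcCoeff_of_lt _ (by omega)]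
    refine (sum_eq_zero fun p hp => ?_).symm
    rw [HasAntidiagonal.mem_antidiagonal] at hp
    by_cases h1 : p.1 ≤ m
    · rw [gcCoeff_of_lt y (by omega), br_zero_right @br @hR]
    · rw [gcCoeff_of_lt x (by omega), br_zero_left @br @hL]

include hL hR in
theorem gcBr_gcBr_apply {m n p : ℕ} (x : Fin (m + 1) → g m) (y : Fin (n + 1) → g n)
    (z : Fin (p + 1) → g p) (i : Fin (m + (n + p) + 1)) :
    gcBr br x (gcBr br y z) i = ∑ a ∈ antidiagonal i.1, ∑ b ∈ antidiagonal a.2,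
      br (gcCoeff x a.1) (br (gcCoeff y b.1) (gcCoeff z b.2)) := by
  rw [gcBr_apply @br @hL @hR]
  refine sum_congr rfl fun a _ => ?_
  rw [gcCoeff_gcBr @br @hL @hR, br_sum_right @br @hR]

include hL hR in
theorem gcBr_gcBr_apply_left {m n p : ℕ} (x : Fin (m + 1) → g m) (y : Fin (n + 1) → g n)
    (z : Fin (p + 1) → g p) (i : Fin (m + n + p + 1)) :
    gcBr br (gcBr br x y) z i = ∑ a ∈ antidiagonal i.1, ∑ b ∈ antidiagonal a.1,
      br (br (gcCoeff x b.1) (gcCoeff y b.2)) (gcCoeff z a.2) := by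
  rw [gcBr_apply @br @hL @hR]
  refine sum_congr rfl fun a _ => ?_
  rw [gcCoeff_gcBr @br @hL @hR, br_sum_left @br @hL]

include hL hR in
theorem gcBr_skew
    (br_skew : ∀ {m n : ℕ} (x : g m) (y : g n),
      br x y = (-(-1 : ℤ) ^ (m * n)) • GradedCast (F := g) (Nat.add_comm n m) (br y x))
    {m n : ℕ} (x : Fin (m + 1) → g m) (y : Fin (n + 1) → g n) :
    gcBr br x y
      = (-(-1 : ℤ) ^ (m * n)) •
          GradedCast (F := fun k => Fin (k + 1) → g k) (Nat.add_comm n m) (gcBr br y x) := by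
  funext i
  rw [gcBr_apply @br @hL @hR, Pi.smul_apply, gradedCast_pi_apply, gcBr_apply @br @hL @hR,
    gradedCast_sum, smul_sum, ← Nat.sum_antidiagonal_swap]
  exact sum_congr rfl fun _ _ => br_skew _ _

include hL hR in
theorem gcBr_jacobi
    (br_jacobi : ∀ {m n p : ℕ} (x : g m) (y : g n) (z : g p),
      br x (br y z)
        = GradedCast (F := g) (Nat.add_assoc m n p) (br (br x y) z)
          + ((-1 : ℤ) ^ (m * n)) •
              GradedCast (F := g) (Nat.add_left_comm n m p) (br y (br x z)))
    {m n p : ℕ} (x : Fin (m + 1) → g m) (y : Fin (n + 1) → g n) (z : Fin (p + 1) → g p) :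
    gcBr br x (gcBr br y z)
      = GradedCast (F := fun k => Fin (k + 1) → g k) (Nat.add_assoc m n p)
          (gcBr br (gcBr br x y) z)
        + ((-1 : ℤ) ^ (m * n)) •
            GradedCast (F := fun k => Fin (k + 1) → g k)
              (Nat.add_left_comm n m p) (gcBr br y (gcBr br x z)) := by
  funext i
  rw [Pi.add_apply, Pi.smul_apply, gradedCast_pi_apply, gradedCast_pi_apply,
    gcBr_gcBr_apply @br @hL @hR, gcBr_gcBr_apply_left @br @hL @hR, gcBr_gcBr_apply @br @hL @hR]
  simp only [br_jacobi (gcCoeff x _), sum_add_distrib, gradedCast_sum, smul_sum]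
  exact congrArg₂ (· + ·)
    (sum_antidiagonal_antidiagonal_assoc
      (fun a b c => GradedCast _ (br (br (gcCoeff x a) (gcCoeff y b)) (gcCoeff z c))) _)
    (sum_antidiagonal_antidiagonal_left_comm
      (fun a b c => _ • GradedCast _ (br (gcCoeff y b) (br (gcCoeff x a) (gcCoeff z c)))) _)

end Bracket

/-- If `g` is a graded Lie algebra, then `(g_c, ⟦·,·⟧)` is a graded Lie algebra: the
bracket `gcBr` is graded skew-symmetric and satisfies the graded Jacobi identity. -/
theorem gc_is_graded_lie
    {g : ℕ → Type*} [∀ n, AddCommGroup (g n)]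
    (br : ∀ {m n : ℕ}, g m → g n → g (m + n))
    (br_add_left : ∀ {m n : ℕ} (x y : g m) (z : g n), br (x + y) z = br x z + br y z)
    (br_add_right : ∀ {m n : ℕ} (x : g m) (y z : g n), br x (y + z) = br x y + br x z)
    (br_skew : ∀ {m n : ℕ} (x : g m) (y : g n),
      br x y = (-(-1 : ℤ) ^ (m * n)) • GradedCast (F := g) (Nat.add_comm n m) (br y x))
    (br_jacobi : ∀ {m n p : ℕ} (x : g m) (y : g n) (z : g p),
      br x (br y z)
        = GradedCast (F := g) (Nat.add_assoc m n p) (br (br x y) z)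
          + ((-1 : ℤ) ^ (m * n)) •
              GradedCast (F := g) (by omega : n + (m + p) = m + (n + p)) (br y (br x z))) :
    (∀ (m n : ℕ) (x : Fin (m + 1) → g m) (y : Fin (n + 1) → g n),
      gcBr br x y
        = (-(-1 : ℤ) ^ (m * n)) •
            GradedCast (F := fun k => Fin (k + 1) → g k) (Nat.add_comm n m) (gcBr br y x)) ∧
    (∀ (m n p : ℕ) (x : Fin (m + 1) → g m) (y : Fin (n + 1) → g n) (z : Fin (p + 1) → g p),
      gcBr br x (gcBr br y z)
        = GradedCast (F := fun k => Fin (k + 1) → g k) (Nat.add_assoc m n p)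
            (gcBr br (gcBr br x y) z)
          + ((-1 : ℤ) ^ (m * n)) •
              GradedCast (F := fun k => Fin (k + 1) → g k)
                (by omega : n + (m + p) = m + (n + p)) (gcBr br y (gcBr br x z))) :=
  ⟨fun _ _ => gcBr_skew @br @br_add_left @br_add_right @br_skew,
    fun _ _ _ => gcBr_jacobi @br @br_add_left @br_add_right @br_jacobi⟩
end

section
/- Let A be a compatible associative algebra and M a compatible A-bimodule. If f = (f₁, f₂) ∈ C²(A,M) ⊕ C²(A,M) is a 2-cocycle (δ₁f₁ = 0, δ₁f₂ + δ₂f₁ = 0, δ₂f₂ = 0), then A ⊕ M with products (a,m)·ᵢ(b,n) = (a·ᵢb, a·ᵢn + m·ᵢb + fᵢ(a,b)), i = 1,2, is a compatible associative algebra. -/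
/-!
Compare the two sides componentwise. In `A` one gets associativity (resp. compatibility) of
the products `μᵢ`. In `M` the terms in which `m`, `n` or `p` occur cancel by the bimodule
axioms (resp. their mixed versions), and what is left is exactly the Hochschild coboundary
`δ₁f₁`, `δ₂f₂` (resp. `δ₁f₂ + δ₂f₁`) evaluated at `(a, b, c)`.
-/

section TwistedSemidirectProduct

variable {R A M : Type*} [CommSemiring R] [AddCommMonoid A] [Module R A]
  [AddCommGroup M] [Module R M]

def hochschildCoboundary₂ (μ : A →ₗ[R] A →ₗ[R] A) (l : A →ₗ[R] M →ₗ[R] M)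
    (r : M →ₗ[R] A →ₗ[R] M) (f : A →ₗ[R] A →ₗ[R] M) (a b c : A) : M :=
  l a (f b c) - f (μ a b) c + f a (μ b c) - r (f a b) c

def twistedMul (μ : A →ₗ[R] A →ₗ[R] A) (l : A →ₗ[R] M →ₗ[R] M) (r : M →ₗ[R] A →ₗ[R] M)
    (f : A →ₗ[R] A →ₗ[R] M) (x y : A × M) : A × M :=
  (μ x.1 y.1, l x.1 y.2 + r x.2 y.1 + f x.1 y.1)

theorem twistedMul_assoc {μ : A →ₗ[R] A →ₗ[R] A} {l : A →ₗ[R] M →ₗ[R] M}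
    {r : M →ₗ[R] A →ₗ[R] M} {f : A →ₗ[R] A →ₗ[R] M}
    (hμ : ∀ a b c : A, μ (μ a b) c = μ a (μ b c))
    (hl : ∀ (a b : A) (m : M), l (μ a b) m = l a (l b m))
    (hlr : ∀ (a b : A) (m : M), r (l a m) b = l a (r m b))
    (hr : ∀ (a b : A) (m : M), r (r m a) b = r m (μ a b))
    (hf : ∀ a b c : A, hochschildCoboundary₂ μ l r f a b c = 0) (x y z : A × M) :
    twistedMul μ l r f (twistedMul μ l r f x y) z =
      twistedMul μ l r f x (twistedMul μ l r f y z) := by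
  obtain ⟨a, m⟩ := x
  obtain ⟨b, n⟩ := y
  obtain ⟨c, p⟩ := z
  refine Prod.ext (hμ a b c) ?_
  have hδ := hf a b c
  simp only [hochschildCoboundary₂] at hδ
  simp only [twistedMul, map_add, LinearMap.add_apply]
  linear_combination (norm := abel) hl a b p + hlr a c n + hr b c m - hδ

theorem twistedMul_compatible {μ₁ μ₂ : A →ₗ[R] A →ₗ[R] A} {l₁ l₂ : A →ₗ[R] M →ₗ[R] M}
    {r₁ r₂ : M →ₗ[R] A →ₗ[R] M} {f₁ f₂ : A →ₗ[R] A →ₗ[R] M}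
    (hμ : ∀ a b c : A,
      μ₂ (μ₁ a b) c + μ₁ (μ₂ a b) c = μ₁ a (μ₂ b c) + μ₂ a (μ₁ b c))
    (hl : ∀ (a b : A) (m : M),
      l₂ (μ₁ a b) m + l₁ (μ₂ a b) m = l₁ a (l₂ b m) + l₂ a (l₁ b m))
    (hlr : ∀ (a b : A) (m : M),
      r₂ (l₁ a m) b + r₁ (l₂ a m) b = l₁ a (r₂ m b) + l₂ a (r₁ m b))
    (hr : ∀ (a b : A) (m : M),
      r₂ (r₁ m a) b + r₁ (r₂ m a) b = r₁ m (μ₂ a b) + r₂ m (μ₁ a b))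
    (hf : ∀ a b c : A,
      hochschildCoboundary₂ μ₁ l₁ r₁ f₂ a b c + hochschildCoboundary₂ μ₂ l₂ r₂ f₁ a b c = 0)
    (x y z : A × M) :
    twistedMul μ₂ l₂ r₂ f₂ (twistedMul μ₁ l₁ r₁ f₁ x y) z +
        twistedMul μ₁ l₁ r₁ f₁ (twistedMul μ₂ l₂ r₂ f₂ x y) z =
      twistedMul μ₁ l₁ r₁ f₁ x (twistedMul μ₂ l₂ r₂ f₂ y z) +
        twistedMul μ₂ l₂ r₂ f₂ x (twistedMul μ₁ l₁ r₁ f₁ y z) := by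
  obtain ⟨a, m⟩ := x
  obtain ⟨b, n⟩ := y
  obtain ⟨c, p⟩ := z
  refine Prod.ext (hμ a b c) ?_
  have hδ := hf a b c
  simp only [hochschildCoboundary₂] at hδ
  simp only [twistedMul, Prod.snd_add, map_add, LinearMap.add_apply]
  linear_combination (norm := abel) hl a b p + hlr a c n + hr b c m - hδ

end TwistedSemidirectProduct

theorem twisted_semidirect_product_compatible_general
    {K A M : Type*} [Field K]
    [AddCommGroup A] [Module K A] [AddCommGroup M] [Module K M]
    (μ₁ μ₂ : A →ₗ[K] A →ₗ[K] A)
    (h₁ : ∀ a b c : A, μ₁ (μ₁ a b) c = μ₁ a (μ₁ b c))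
    (h₂ : ∀ a b c : A, μ₂ (μ₂ a b) c = μ₂ a (μ₂ b c))
    (hcomp : ∀ a b c : A,
      μ₂ (μ₁ a b) c + μ₁ (μ₂ a b) c = μ₁ a (μ₂ b c) + μ₂ a (μ₁ b c))
    (l₁ l₂ : A →ₗ[K] M →ₗ[K] M) (r₁ r₂ : M →ₗ[K] A →ₗ[K] M)
    (hb₁l : ∀ (a b : A) (m : M), l₁ (μ₁ a b) m = l₁ a (l₁ b m))
    (hb₁m : ∀ (a b : A) (m : M), r₁ (l₁ a m) b = l₁ a (r₁ m b))
    (hb₁r : ∀ (a b : A) (m : M), r₁ (r₁ m a) b = r₁ m (μ₁ a b))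
    (hb₂l : ∀ (a b : A) (m : M), l₂ (μ₂ a b) m = l₂ a (l₂ b m))
    (hb₂m : ∀ (a b : A) (m : M), r₂ (l₂ a m) b = l₂ a (r₂ m b))
    (hb₂r : ∀ (a b : A) (m : M), r₂ (r₂ m a) b = r₂ m (μ₂ a b))
    (hm₁ : ∀ (a b : A) (m : M),
      l₂ (μ₁ a b) m + l₁ (μ₂ a b) m = l₁ a (l₂ b m) + l₂ a (l₁ b m))
    (hm₂ : ∀ (a b : A) (m : M),
      r₂ (l₁ a m) b + r₁ (l₂ a m) b = l₁ a (r₂ m b) + l₂ a (r₁ m b))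
    (hm₃ : ∀ (a b : A) (m : M),
      r₂ (r₁ m a) b + r₁ (r₂ m a) b = r₁ m (μ₂ a b) + r₂ m (μ₁ a b))
    -- `(f₁, f₂)` is a 2-cocycle: `δ₁f₁ = 0`, `δ₁f₂ + δ₂f₁ = 0`, `δ₂f₂ = 0`
    (f₁ f₂ : A →ₗ[K] A →ₗ[K] M)
    (hf₁ : ∀ a b c : A,
      l₁ a (f₁ b c) - f₁ (μ₁ a b) c + f₁ a (μ₁ b c) - r₁ (f₁ a b) c = 0)
    (hf₁₂ : ∀ a b c : A,
      (l₁ a (f₂ b c) - f₂ (μ₁ a b) c + f₂ a (μ₁ b c) - r₁ (f₂ a b) c)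
        + (l₂ a (f₁ b c) - f₁ (μ₂ a b) c + f₁ a (μ₂ b c) - r₂ (f₁ a b) c) = 0)
    (hf₂ : ∀ a b c : A,
      l₂ a (f₂ b c) - f₂ (μ₂ a b) c + f₂ a (μ₂ b c) - r₂ (f₂ a b) c = 0)
    (P₁ P₂ : A × M → A × M → A × M)
    (hP₁ : ∀ (a b : A) (m n : M),
      P₁ (a, m) (b, n) = (μ₁ a b, l₁ a n + r₁ m b + f₁ a b))
    (hP₂ : ∀ (a b : A) (m n : M),
      P₂ (a, m) (b, n) = (μ₂ a b, l₂ a n + r₂ m b + f₂ a b)) :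
    (∀ x y z : A × M, P₁ (P₁ x y) z = P₁ x (P₁ y z)) ∧
    (∀ x y z : A × M, P₂ (P₂ x y) z = P₂ x (P₂ y z)) ∧
    (∀ x y z : A × M,
      P₂ (P₁ x y) z + P₁ (P₂ x y) z = P₁ x (P₂ y z) + P₂ x (P₁ y z)) := by
  obtain rfl : P₁ = twistedMul μ₁ l₁ r₁ f₁ := funext₂ fun ⟨a, m⟩ ⟨b, n⟩ ↦ hP₁ a b m n
  obtain rfl : P₂ = twistedMul μ₂ l₂ r₂ f₂ := funext₂ fun ⟨a, m⟩ ⟨b, n⟩ ↦ hP₂ a b m n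
  exact ⟨twistedMul_assoc h₁ hb₁l hb₁m hb₁r hf₁, twistedMul_assoc h₂ hb₂l hb₂m hb₂r hf₂,
    twistedMul_compatible hcomp hm₁ hm₂ hm₃ hf₁₂⟩

/-- If `(f₁, f₂)` is a 2-cocycle of a compatible associative algebra `A` with values in a
compatible `A`-bimodule `M`, then `A ⊕ M` with the twisted products
`(a,m)·ᵢ(b,n) = (a·ᵢb, a·ᵢn + m·ᵢb + fᵢ(a,b))` is a compatible associative algebra. -/
theorem twisted_semidirect_product_compatible
    {K A M : Type*} [Field K] [CharZero K]
    [AddCommGroup A] [Module K A] [AddCommGroup M] [Module K M]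
    (μ₁ μ₂ : A →ₗ[K] A →ₗ[K] A)
    (h₁ : ∀ a b c : A, μ₁ (μ₁ a b) c = μ₁ a (μ₁ b c))
    (h₂ : ∀ a b c : A, μ₂ (μ₂ a b) c = μ₂ a (μ₂ b c))
    (hcomp : ∀ a b c : A,
      μ₂ (μ₁ a b) c + μ₁ (μ₂ a b) c = μ₁ a (μ₂ b c) + μ₂ a (μ₁ b c))
    (l₁ l₂ : A →ₗ[K] M →ₗ[K] M) (r₁ r₂ : M →ₗ[K] A →ₗ[K] M)
    (hb₁l : ∀ (a b : A) (m : M), l₁ (μ₁ a b) m = l₁ a (l₁ b m))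
    (hb₁m : ∀ (a b : A) (m : M), r₁ (l₁ a m) b = l₁ a (r₁ m b))
    (hb₁r : ∀ (a b : A) (m : M), r₁ (r₁ m a) b = r₁ m (μ₁ a b))
    (hb₂l : ∀ (a b : A) (m : M), l₂ (μ₂ a b) m = l₂ a (l₂ b m))
    (hb₂m : ∀ (a b : A) (m : M), r₂ (l₂ a m) b = l₂ a (r₂ m b))
    (hb₂r : ∀ (a b : A) (m : M), r₂ (r₂ m a) b = r₂ m (μ₂ a b))
    (hm₁ : ∀ (a b : A) (m : M),
      l₂ (μ₁ a b) m + l₁ (μ₂ a b) m = l₁ a (l₂ b m) + l₂ a (l₁ b m))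
    (hm₂ : ∀ (a b : A) (m : M),
      r₂ (l₁ a m) b + r₁ (l₂ a m) b = l₁ a (r₂ m b) + l₂ a (r₁ m b))
    (hm₃ : ∀ (a b : A) (m : M),
      r₂ (r₁ m a) b + r₁ (r₂ m a) b = r₁ m (μ₂ a b) + r₂ m (μ₁ a b))
    -- `(f₁, f₂)` is a 2-cocycle: `δ₁f₁ = 0`, `δ₁f₂ + δ₂f₁ = 0`, `δ₂f₂ = 0`
    (f₁ f₂ : A →ₗ[K] A →ₗ[K] M)
    (hf₁ : ∀ a b c : A,
      l₁ a (f₁ b c) - f₁ (μ₁ a b) c + f₁ a (μ₁ b c) - r₁ (f₁ a b) c = 0)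
    (hf₁₂ : ∀ a b c : A,
      (l₁ a (f₂ b c) - f₂ (μ₁ a b) c + f₂ a (μ₁ b c) - r₁ (f₂ a b) c)
        + (l₂ a (f₁ b c) - f₁ (μ₂ a b) c + f₁ a (μ₂ b c) - r₂ (f₁ a b) c) = 0)
    (hf₂ : ∀ a b c : A,
      l₂ a (f₂ b c) - f₂ (μ₂ a b) c + f₂ a (μ₂ b c) - r₂ (f₂ a b) c = 0)
    (P₁ P₂ : A × M → A × M → A × M)
    (hP₁ : ∀ (a b : A) (m n : M),
      P₁ (a, m) (b, n) = (μ₁ a b, l₁ a n + r₁ m b + f₁ a b))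
    (hP₂ : ∀ (a b : A) (m n : M),
      P₂ (a, m) (b, n) = (μ₂ a b, l₂ a n + r₂ m b + f₂ a b)) :
    (∀ x y z : A × M, P₁ (P₁ x y) z = P₁ x (P₁ y z)) ∧
    (∀ x y z : A × M, P₂ (P₂ x y) z = P₂ x (P₂ y z)) ∧
    (∀ x y z : A × M,
      P₂ (P₁ x y) z + P₁ (P₂ x y) z = P₁ x (P₂ y z) + P₂ x (P₁ y z)) :=
  twisted_semidirect_product_compatible_general μ₁ μ₂ h₁ h₂ hcomp l₁ l₂ r₁ r₂ hb₁l hb₁m hb₁r hb₂l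
    hb₂m hb₂r hm₁ hm₂ hm₃ f₁ f₂ hf₁ hf₁₂ hf₂ P₁ P₂ hP₁ hP₂
end

section
/- If (A, μ) is associative, M is an A-bimodule and f ∈ C²(A,M) is a Hochschild 2-cocycle, then the products (a,m)·₀(b,n) = (a·b, a·n + m·b) and (a,m)·_f(b,n) = (a·b, a·n + m·b + f(a,b)) make (A⊕M, ·₀, ·_f) a compatible associative algebra. -/
/-- If `(A, μ)` is associative, `M` an `A`-bimodule and `f` a Hochschild 2-cocycle, then
the products `(a,m)·₀(b,n) = (a·b, a·n + m·b)` and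
`(a,m)·_f(b,n) = (a·b, a·n + m·b + f(a,b))` make `(A⊕M, ·₀, ·_f)` a compatible
associative algebra. -/
theorem twisted_pair_compatible
    {K A M : Type*} [Field K] [CharZero K]
    [AddCommGroup A] [Module K A] [AddCommGroup M] [Module K M]
    (μ : A →ₗ[K] A →ₗ[K] A)
    (hassoc : ∀ a b c : A, μ (μ a b) c = μ a (μ b c))
    (l : A →ₗ[K] M →ₗ[K] M) (r : M →ₗ[K] A →ₗ[K] M)
    (hbl : ∀ (a b : A) (m : M), l (μ a b) m = l a (l b m))
    (hbm : ∀ (a b : A) (m : M), r (l a m) b = l a (r m b))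
    (hbr : ∀ (a b : A) (m : M), r (r m a) b = r m (μ a b))
    (f : A →ₗ[K] A →ₗ[K] M)
    (hf : ∀ a b c : A,
      l a (f b c) - f (μ a b) c + f a (μ b c) - r (f a b) c = 0)
    (P₀ Pf : A × M → A × M → A × M)
    (hP₀ : ∀ (a b : A) (m n : M), P₀ (a, m) (b, n) = (μ a b, l a n + r m b))
    (hPf : ∀ (a b : A) (m n : M),
      Pf (a, m) (b, n) = (μ a b, l a n + r m b + f a b)) :
    (∀ x y z : A × M, P₀ (P₀ x y) z = P₀ x (P₀ y z)) ∧
    (∀ x y z : A × M, Pf (Pf x y) z = Pf x (Pf y z)) ∧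
    (∀ x y z : A × M,
      Pf (P₀ x y) z + P₀ (Pf x y) z = P₀ x (Pf y z) + Pf x (P₀ y z)) := by
  refine ⟨fun x y z => ?_, fun x y z => ?_, fun x y z => ?_⟩ <;>
  · obtain ⟨a, m⟩ := x; obtain ⟨b, n⟩ := y; obtain ⟨c, p⟩ := z
    simp only [hP₀, hPf, Prod.mk_add_mk, Prod.mk.injEq, map_add,
      LinearMap.add_apply, hbl, hbm, hbr, hassoc]
    refine ⟨trivial, ?_⟩
    have h2 := neg_eq_zero.mpr (hf a b c)
    try abel
    all_goals (rw [← sub_eq_zero, ← h2]; abel)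
end
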